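/- Let R₁, R₂ ⊆ V × V and α₁, α₂ ∈ [0,1]. Then the composition of lifted relations satisfies (R₁)†_{α₁} ∘ (R₂)†_{α₂} ⊆ (R₁ ∘ R₂)†_{α₁ ⊗ α₂}, where ⊗ is the underlying left-continuous t-norm. -/

import Mathlib

open unitInterval

instance : Fact ((0:ℝ) ≤ 1) := ⟨zero_le_one⟩

/-- A left-continuous t-norm on the unit interval. -/
structure LCTNorm where
  mul : unitInterval → unitInterval → unitInterval
  mul_comm : ∀ s t, mul s t = mul t s
  mul_assoc : ∀ r s t, mul r (mul s t) = mul (mul r s) t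
  mul_mono : ∀ r s t, r ≤ s → mul r t ≤ mul s t
  mul_one : ∀ s, mul s 1 = s
  left_cont : ∀ (r : unitInterval) (S : Set unitInterval), mul r (sSup S) = sSup (mul r '' S)

/-- The residuum `t → r` of a left-continuous t-norm. -/
noncomputable def LCTNorm.res (T : LCTNorm) (t r : unitInterval) : unitInterval :=
  sSup {s | T.mul s t ≤ r}
variable {V : Type*}

/-- The lifting function S̃(p, q, R). -/
noncomputable def Stilde [Fintype V] (T : LCTNorm) (R : Set (V × V))
    (p q : V → unitInterval) : unitInterval :=
  ⨅ u : V,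
    (T.res (p u) (⨆ v ∈ {v | (u, v) ∈ R}, q v) ⊓
     T.res (q u) (⨆ v ∈ {v | (v, u) ∈ R}, p v))

/-- The lifted relation `R†_α`. -/
noncomputable def lift [Fintype V] (T : LCTNorm) (α : unitInterval) (R : Set (V × V)) :
    Set ((V → unitInterval) × (V → unitInterval)) :=
  {pq | α ≤ Stilde T R pq.1 pq.2}

/-- Relational composition of subsets of products. -/
def relComp {X Y Z : Type*} (R₁ : Set (X × Y)) (R₂ : Set (Y × Z)) : Set (X × Z) :=
  {uw | ∃ v, (uw.1, v) ∈ R₁ ∧ (v, uw.2) ∈ R₂}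

/-!
Unfolding the residuum, `α ≤ S̃(p, q, R)` says that `α ⊗ p u` is bounded by the supremum of `q`
over the `R`-successors of `u`, and symmetrically for `q` along `R⁻¹`. Such forward bounds compose:
multiply the bound for `(p, q, R₁)` by `α₂` and push `α₂` inside the supremum (left continuity),
where the bound for `(q, r, R₂)` applies. The backward half is the forward half for the converse
relations, since `(R₁ ∘ R₂)⁻¹ = R₂⁻¹ ∘ R₁⁻¹`.
-/

namespace LCTNorm

variable (T : LCTNorm)

lemma mul_mono_right (r : I) {s t : I} (h : s ≤ t) : T.mul r s ≤ T.mul r t := by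
  rw [T.mul_comm r s, T.mul_comm r t]
  exact T.mul_mono _ _ _ h

lemma mul_iSup {ι : Sort*} (r : I) (f : ι → I) : T.mul r (⨆ i, f i) = ⨆ i, T.mul r (f i) := by
  rw [iSup, T.left_cont, ← Set.range_comp, iSup]
  rfl

lemma mul_res_le (t r : I) : T.mul (T.res t r) t ≤ r := by
  rw [T.mul_comm, res, T.left_cont]
  refine sSup_le ?_
  rintro _ ⟨s, hs, rfl⟩
  rw [T.mul_comm]
  exact hs

lemma le_res_iff {s t r : I} : s ≤ T.res t r ↔ T.mul s t ≤ r :=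
  ⟨fun h => (T.mul_mono _ _ _ h).trans (T.mul_res_le t r), fun h => le_sSup h⟩

end LCTNorm

def ForthBound (T : LCTNorm) (α : I) (R : Set (V × V)) (p q : V → I) : Prop :=
  ∀ u, T.mul α (p u) ≤ ⨆ v ∈ {v | (u, v) ∈ R}, q v

lemma le_Stilde_iff [Fintype V] (T : LCTNorm) (α : I) (R : Set (V × V)) (p q : V → I) :
    α ≤ Stilde T R p q ↔ ForthBound T α R p q ∧ ForthBound T α (Prod.swap ⁻¹' R) q p := by
  simp only [Stilde, le_iInf_iff, le_inf_iff, T.le_res_iff, forall_and]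
  rfl

lemma ForthBound.comp {T : LCTNorm} {α₁ α₂ : I} {R₁ R₂ : Set (V × V)} {p q r : V → I}
    (h₁ : ForthBound T α₁ R₁ p q) (h₂ : ForthBound T α₂ R₂ q r) :
    ForthBound T (T.mul α₁ α₂) (relComp R₁ R₂) p r := by
  intro u
  have push_inside : T.mul α₂ (⨆ v ∈ {v | (u, v) ∈ R₁}, q v)
      ≤ ⨆ w ∈ {w | (u, w) ∈ relComp R₁ R₂}, r w := by
    simp only [T.mul_iSup]
    refine iSup₂_le fun v huv => (h₂ v).trans ?_
    exact iSup₂_le fun w hvw => le_iSup₂ (f := fun w _ => r w) w ⟨v, huv, hvw⟩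
  calc T.mul (T.mul α₁ α₂) (p u) = T.mul α₂ (T.mul α₁ (p u)) := by
        rw [T.mul_comm α₁ α₂, T.mul_assoc]
    _ ≤ T.mul α₂ (⨆ v ∈ {v | (u, v) ∈ R₁}, q v) := T.mul_mono_right _ (h₁ u)
    _ ≤ _ := push_inside

lemma preimage_swap_relComp {X Y Z : Type*} (R₁ : Set (X × Y)) (R₂ : Set (Y × Z)) :
    Prod.swap ⁻¹' relComp R₁ R₂ = relComp (Prod.swap ⁻¹' R₂) (Prod.swap ⁻¹' R₁) := by
  ext ⟨x, z⟩
  simp only [relComp, Set.mem_preimage, Set.mem_ofPred_eq, Prod.swap_prod_mk]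
  exact exists_congr fun _ => and_comm

theorem lift_comp_general [Fintype V] (T : LCTNorm) (R₁ R₂ : Set (V × V))
    (α₁ α₂ : unitInterval) :
    relComp (lift T α₁ R₁) (lift T α₂ R₂) ⊆ lift T (T.mul α₁ α₂) (relComp R₁ R₂) := by
  rintro ⟨p, r⟩ ⟨q, hpq, hqr⟩
  simp only [lift, Set.mem_ofPred_eq, le_Stilde_iff] at hpq hqr ⊢
  refine ⟨hpq.1.comp hqr.1, ?_⟩
  rw [preimage_swap_relComp, T.mul_comm]
  exact hqr.2.comp hpq.2

/-- Composition of lifted relations. -/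
theorem lift_comp [Fintype V] [Nonempty V] (T : LCTNorm) (R₁ R₂ : Set (V × V))
    (α₁ α₂ : unitInterval) :
    relComp (lift T α₁ R₁) (lift T α₂ R₂) ⊆ lift T (T.mul α₁ α₂) (relComp R₁ R₂) :=
  lift_comp_general T R₁ R₂ α₁ α₂
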